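/- arXiv:2402.11787 — 3 statements merged into one kernel-verified Lean document; each statement's English description precedes it below -/
import Mathlib

section
/- Let -1 ≤ β < α < 1 with β < 0, and set α₀ = α/(1+α) and β₀ = (β - α²)/(1 - α²). Suppose m is a real number such that every spherical {α₀,β₀}-code in ℝ^d has size at most m. Then every spherical {α,β}-code in ℝ^d has size at most ((α-β)/(-β)) · (m + (1-β)/(α-β)). -/
open Matrix

noncomputable section

/-- The real inner product on `ℝ^d`. -/
def rinner {d : ℕ} (x y : EuclideanSpace ℝ (Fin d)) : ℝ := inner ℝ x y

/-- A spherical `{α, β}`-code in `ℝ^d`: a family of unit vectors whose pairwise inner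
products of distinct vectors lie in `{α, β}`. -/
def IsSphericalCode (α β : ℝ) {d n : ℕ} (u : Fin n → EuclideanSpace ℝ (Fin d)) : Prop :=
  (∀ i, ‖u i‖ = 1) ∧ ∀ i j, i ≠ j → rinner (u i) (u j) = α ∨ rinner (u i) (u j) = β

/-!
Fix a code vector `u i`. Its `α`-neighbours, projected onto the orthogonal complement of `u i`
and rescaled by `1/√(1-α²)`, form an `{α₀, β₀}`-code, so `u i` has at most `m` of them.
Expanding `0 ≤ ‖∑ i, u i‖²` row by row then gives `0 ≤ n (1 + β (n - 1) + (α - β) m)`, and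
dividing by `n` is the claimed bound.
-/

open Finset RealInnerProductSpace

section InnerProductSpace

variable {E : Type*} [NormedAddCommGroup E] [InnerProductSpace ℝ E]

lemma sum_sum_inner_nonneg {ι : Type*} [Fintype ι] (v : ι → E) :
    0 ≤ ∑ i, ∑ j, ⟪v i, v j⟫ := by
  have h : ∑ i, ∑ j, ⟪v i, v j⟫ = ‖∑ i, v i‖ ^ 2 := by
    simp only [← real_inner_self_eq_norm_sq, sum_inner, inner_sum]
    exact sum_comm
  rw [h]
  positivity

/-- The factor `1/√(1-α²)` makes this a unit vector when `x` is one and `⟪x, v⟫ = α`. -/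
def sphereProj (α : ℝ) (v x : E) : E := (√(1 - α ^ 2))⁻¹ • (x - α • v)

lemma inner_sphereProj {α : ℝ} {v x y : E} (hα : α ^ 2 ≤ 1) (hv : ‖v‖ = 1)
    (hx : ⟪x, v⟫ = α) (hy : ⟪y, v⟫ = α) :
    ⟪sphereProj α v x, sphereProj α v y⟫ = (⟪x, y⟫ - α ^ 2) / (1 - α ^ 2) := by
  have hc : (√(1 - α ^ 2))⁻¹ ^ 2 = (1 - α ^ 2)⁻¹ := by
    rw [inv_pow, Real.sq_sqrt (by linarith)]
  rw [real_inner_comm] at hy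
  simp only [sphereProj, real_inner_smul_left, real_inner_smul_right, inner_sub_left,
    inner_sub_right, real_inner_self_eq_norm_sq, hv, hx, hy]
  linear_combination (⟪x, y⟫ - α ^ 2) * hc

end InnerProductSpace

section SphericalCode

variable {d n : ℕ} {α β : ℝ} {u : Fin n → EuclideanSpace ℝ (Fin d)}

def neighbors (α : ℝ) (u : Fin n → EuclideanSpace ℝ (Fin d)) (i : Fin n) : Finset (Fin n) :=
  {j | j ≠ i ∧ rinner (u i) (u j) = α}

lemma mem_neighbors {i j : Fin n} : j ∈ neighbors α u i ↔ j ≠ i ∧ rinner (u i) (u j) = α := by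
  simp [neighbors]

namespace IsSphericalCode

lemma rinner_self (hu : IsSphericalCode α β u) (i : Fin n) : rinner (u i) (u i) = 1 := by
  rw [rinner, real_inner_self_eq_norm_sq, hu.1 i, one_pow]

lemma rinner_eq_ite (hu : IsSphericalCode α β u) (hβα : β ≠ α) (i j : Fin n) :
    rinner (u i) (u j) =
      β + (if j = i then 1 - β else 0) + (if j ∈ neighbors α u i then α - β else 0) := by
  by_cases hji : j = i
  · subst hji
    simp [mem_neighbors, hu.rinner_self]
  · rcases hu.2 i j (Ne.symm hji) with h | h <;> simp [mem_neighbors, hji, h, hβα]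

lemma sum_rinner (hu : IsSphericalCode α β u) (hβα : β ≠ α) (i : Fin n) :
    ∑ j, rinner (u i) (u j) = 1 + β * (n - 1) + (α - β) * #(neighbors α u i) := by
  simp only [hu.rinner_eq_ite hβα i, sum_add_distrib, sum_const, card_univ, Fintype.card_fin,
    nsmul_eq_mul, sum_ite_eq', mem_univ, ↓reduceIte, sum_ite_mem, univ_inter]
  ring

lemma sphereProj_neighbors (hu : IsSphericalCode α β u) (hα₁ : -1 < α) (hα : α < 1) (i : Fin n) :
    IsSphericalCode (α / (1 + α)) ((β - α ^ 2) / (1 - α ^ 2))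
      (fun t => sphereProj α (u i) (u ((neighbors α u i).equivFin.symm t))) := by
  have hα2 : α ^ 2 < 1 := by nlinarith
  have hproj : ∀ j ∈ neighbors α u i, ∀ k ∈ neighbors α u i,
      rinner (sphereProj α (u i) (u j)) (sphereProj α (u i) (u k)) =
        (rinner (u j) (u k) - α ^ 2) / (1 - α ^ 2) := by
    intro j hj k hk
    rw [mem_neighbors] at hj hk
    exact inner_sphereProj hα2.le (hu.1 i) ((real_inner_comm (u i) (u j)).trans hj.2)
      ((real_inner_comm (u i) (u k)).trans hk.2)
  set e := (neighbors α u i).equivFin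
  refine ⟨fun t => ?_, fun t s hts => ?_⟩
  · have h := hproj _ (e.symm t).2 _ (e.symm t).2
    rw [hu.rinner_self, div_self (by linarith), rinner, real_inner_self_eq_norm_sq] at h
    exact (pow_eq_one_iff_of_nonneg (norm_nonneg _) two_ne_zero).1 h
  · have hne : (e.symm t : Fin n) ≠ e.symm s := fun h => hts (e.symm.injective (Subtype.ext h))
    rw [hproj _ (e.symm t).2 _ (e.symm s).2]
    rcases hu.2 _ _ hne with h | h <;> rw [h]
    · left
      rw [div_eq_div_iff (by linarith) (by linarith)]
      ring
    · exact Or.inr rfl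

lemma card_le_of_card_neighbors_le (hu : IsSphericalCode α β u) (hβ : β < 0) (hβα : β < α)
    {m : ℝ} (hm : 0 ≤ m) (hdeg : ∀ i, (#(neighbors α u i) : ℝ) ≤ m) :
    (n : ℝ) ≤ (α - β) / (-β) * (m + (1 - β) / (α - β)) := by
  have hrow : ∀ i, ∑ j, rinner (u i) (u j) ≤ 1 + β * (n - 1) + (α - β) * m := fun i => by
    rw [hu.sum_rinner hβα.ne i]
    gcongr
    exact hdeg i
  have hgram : 0 ≤ (n : ℝ) * (1 + β * (n - 1) + (α - β) * m) :=
    calc 0 ≤ ∑ i, ∑ j, rinner (u i) (u j) := sum_sum_inner_nonneg u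
      _ ≤ ∑ _i : Fin n, (1 + β * (n - 1) + (α - β) * m) := sum_le_sum fun i _ => hrow i
      _ = _ := by rw [sum_const, card_univ, Fintype.card_fin, nsmul_eq_mul]
  have hbound : -β * n ≤ (α - β) * m + (1 - β) := by
    rcases (Nat.cast_nonneg (α := ℝ) n).eq_or_lt with hn | hn
    · rw [← hn]
      nlinarith
    · nlinarith [nonneg_of_mul_nonneg_right hgram hn]
  rw [div_mul_eq_mul_div, mul_add, mul_div_cancel₀ _ (sub_ne_zero.2 hβα.ne'),
    le_div_iff₀ (by linarith)]
  linarith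

end IsSphericalCode

end SphericalCode

/-- if every spherical `{α₀,β₀}`-code in `ℝ^d` has size at most `m`, where
`α₀ = α/(1+α)` and `β₀ = (β-α²)/(1-α²)`, then every spherical `{α,β}`-code in `ℝ^d` has
size at most `((α-β)/(-β))·(m + (1-β)/(α-β))`. -/
theorem stmt15 (d : ℕ)
    (α β α₀ β₀ : ℝ) (hβ₁ : -1 ≤ β) (hβα : β < α) (hα : α < 1) (hβ₀ : β < 0)
    (hα₀ : α₀ = α / (1 + α)) (hβ₀' : β₀ = (β - α ^ 2) / (1 - α ^ 2))
    (m : ℝ)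
    (hm : ∀ (n : ℕ) (u : Fin n → EuclideanSpace ℝ (Fin d)),
      IsSphericalCode α₀ β₀ u → (n : ℝ) ≤ m) :
    ∀ (n : ℕ) (u : Fin n → EuclideanSpace ℝ (Fin d)), IsSphericalCode α β u →
      (n : ℝ) ≤ (α - β) / (-β) * (m + (1 - β) / (α - β)) := by
  intro n u hu
  subst hα₀ hβ₀'
  have hm₀ : 0 ≤ m := by
    simpa using hm 0 ![] ⟨fun i => i.elim0, fun i => i.elim0⟩
  exact hu.card_le_of_card_neighbors_le hβ₀ hβα hm₀ fun i =>
    hm _ _ (hu.sphereProj_neighbors (by linarith) hα i)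
end
end

section
/- Let d ≥ 2 be an integer and let -1 ≤ β < α < 1 with β < 0. If (α-β)/(-β) < 1 + 1/(d-1), then every spherical {α,β}-code in ℝ^d has size at most max{d+1, ((-α)/(α-β) + 1/d)⁻¹ · (1-β)/(α-β)}. -/
/-!
Let `G` be the graph on the code joining two vectors with inner product `β`, and `D` the sum of
its degrees. Expanding `‖∑ uᵢ‖² ≥ 0` gives `(α - β) D ≤ n (1 - α) + n² α`. An independent set of
`G` is a family of unit vectors with pairwise inner product `α`; if it had `d + 1` members, a
linear dependence among them would force them to sum to zero, hence `α < 0`, and for `n ≥ d + 2`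
a further code vector would have negative inner product with that zero sum. So the Caro–Wei
bound and Cauchy–Schwarz give `n² / (n + D) ≤ ∑ 1 / (deg + 1) ≤ d`, and eliminating `D` yields
`n (α - β - d α) ≤ d (1 - β)`, where `α - β - d α > 0` is the hypothesis on `(α - β)/(-β)`.
-/

open Matrix

noncomputable section

open Finset RealInnerProductSpace

namespace SimpleGraph

variable {V : Type*} (G : SimpleGraph V) [DecidableRel G.Adj]

theorem exists_isIndepSet_sum_one_div_le [DecidableEq V] (s : Finset V) :
    ∃ t ⊆ s, G.IsIndepSet (t : Set V) ∧
      ∑ v ∈ s, (1 : ℝ) / (#{w ∈ s | G.Adj v w} + 1) ≤ #t := by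
  induction s using Finset.strongInduction with
  | _ s ih =>
    rcases s.eq_empty_or_nonempty with rfl | hne
    · exact ⟨∅, by simp⟩
    -- Greedy step: keep a vertex of minimum degree and discard its neighbourhood.
    obtain ⟨v, hvs, hmin⟩ := s.exists_min_image (fun w => #{x ∈ s | G.Adj w x}) hne
    set N := insert v {w ∈ s | G.Adj v w} with hN
    have hNs : N ⊆ s := insert_subset hvs (filter_subset _ _)
    obtain ⟨t, hts, ht, hsum⟩ := ih (s \ N) (sdiff_ssubset hNs (by simp [hN]))
    have hvt : v ∉ t := fun h => (mem_sdiff.1 (hts h)).2 (mem_insert_self _ _)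
    refine ⟨insert v t, insert_subset hvs (hts.trans sdiff_subset), ?_, ?_⟩
    · rw [coe_insert]
      have hvt' : ∀ w ∈ t, ¬G.Adj v w := fun w hw hvw => (mem_sdiff.1 (hts hw)).2
        (mem_insert_of_mem (mem_filter.2 ⟨(mem_sdiff.1 (hts hw)).1, hvw⟩))
      exact ht.insert fun w hw _ => ⟨hvt' w hw, fun hwv => hvt' w hw hwv.symm⟩
    have hN_le : ∑ w ∈ N, (1 : ℝ) / (#{x ∈ s | G.Adj w x} + 1) ≤ 1 := by
      have hcardN : (#N : ℝ) = #{w ∈ s | G.Adj v w} + 1 := by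
        rw [hN, card_insert_of_notMem (by simp)]; push_cast; rfl
      calc ∑ w ∈ N, (1 : ℝ) / (#{x ∈ s | G.Adj w x} + 1)
          ≤ ∑ w ∈ N, (1 : ℝ) / (#{x ∈ s | G.Adj v x} + 1) := by
            refine sum_le_sum fun w hw => one_div_le_one_div_of_le (by positivity) ?_
            exact_mod_cast Nat.add_le_add_right (hmin w (hNs hw)) 1
        _ = 1 := by rw [sum_const, nsmul_eq_mul, hcardN]; field_simp
    have hrest_le : ∑ w ∈ s \ N, (1 : ℝ) / (#{x ∈ s | G.Adj w x} + 1) ≤ #t := by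
      refine le_trans (sum_le_sum fun w _ => ?_) hsum
      refine one_div_le_one_div_of_le (by positivity) ?_
      exact_mod_cast Nat.add_le_add_right (card_le_card (filter_subset_filter _ sdiff_subset)) 1
    rw [← sum_sdiff hNs, card_insert_of_notMem hvt]
    push_cast
    linarith

/-- The Caro–Wei bound. -/
theorem sum_one_div_degree_add_one_le_indepNum [Fintype V] :
    ∑ v, (1 : ℝ) / (G.degree v + 1) ≤ G.indepNum := by
  classical
  obtain ⟨t, -, ht, hsum⟩ := G.exists_isIndepSet_sum_one_div_le univ
  simp only [← card_neighborFinset_eq_degree, neighborFinset_eq_filter]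
  exact hsum.trans (by exact_mod_cast ht.card_le_indepNum)

end SimpleGraph

variable {E : Type*} [NormedAddCommGroup E] [InnerProductSpace ℝ E]

theorem sum_eq_zero_of_pairwise_inner_eq [FiniteDimensional ℝ E] {ι : Type*} [Fintype ι]
    {v : ι → E} {α : ℝ} (hα : α ≠ 1) (hv : ∀ i, ‖v i‖ = 1)
    (hvα : Pairwise fun i j => (⟪v i, v j⟫ = α)) (hcard : Module.finrank ℝ E < Fintype.card ι) :
    ∑ i, v i = 0 := by
  classical
  obtain ⟨g, hg, i₀, hi₀⟩ := Fintype.not_linearIndependent_iff.1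
    fun hli : LinearIndependent ℝ v => hcard.not_ge hli.fintype_card_le_finrank
  have hgram : ∀ i j, ⟪v i, v j⟫ = α + if i = j then 1 - α else 0 := by
    intro i j
    split_ifs with hij
    · subst hij; rw [real_inner_self_eq_norm_sq, hv]; ring
    · rw [hvα hij, add_zero]
  -- Pair the dependence relation with `v j`.
  have hrow : ∀ j, (1 - α) * g j + α * ∑ i, g i = 0 := by
    intro j
    have := congrArg (⟪·, v j⟫) hg
    simp only [sum_inner, real_inner_smul_left, inner_zero_left, hgram, mul_add, mul_ite,
      mul_zero, sum_add_distrib, sum_ite_eq', mem_univ, if_true] at this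
    rw [← this, ← sum_mul]
    ring
  have hconst : ∀ j, g j = g i₀ := fun j =>
    mul_left_cancel₀ (sub_ne_zero.2 hα.symm) (by linarith [hrow j, hrow i₀])
  have : g i₀ • ∑ i, v i = 0 := by
    rw [smul_sum, ← hg]
    exact sum_congr rfl fun j _ => by rw [hconst j]
  exact (smul_eq_zero.1 this).resolve_left hi₀

def innerGraph {ι : Type*} (u : ι → E) (c : ℝ) : SimpleGraph ι where
  Adj i j := i ≠ j ∧ ⟪u i, u j⟫ = c
  symm := ⟨fun _ _ h => ⟨h.1.symm, real_inner_comm (u _) _ ▸ h.2⟩⟩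
  loopless := ⟨fun _ h => h.1 rfl⟩

instance {ι : Type*} (u : ι → E) (c : ℝ) : DecidableRel (innerGraph u c).Adj :=
  Classical.decRel _

namespace IsSphericalCode

variable {α β : ℝ} {d n : ℕ} {u : Fin n → EuclideanSpace ℝ (Fin d)}

theorem inner_eq_or (hu : IsSphericalCode α β u) {i j : Fin n} (hij : i ≠ j) :
    ⟪u i, u j⟫ = α ∨ ⟪u i, u j⟫ = β :=
  hu.2 i j hij

theorem inner_eq (hu : IsSphericalCode α β u) (i j : Fin n) :
    ⟪u i, u j⟫ = α + (if i = j then 1 - α else 0) +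
      if (innerGraph u β).Adj i j then β - α else 0 := by
  by_cases hij : i = j
  · subst hij
    simp [hu.1 i]
  rw [if_neg hij]
  by_cases hβ : ⟪u i, u j⟫ = β
  · rw [if_pos ⟨hij, hβ⟩, hβ]
    ring
  · rw [if_neg fun h => hβ h.2, add_zero, add_zero]
    exact (hu.inner_eq_or hij).resolve_right hβ

theorem norm_sum_sq (hu : IsSphericalCode α β u) :
    ‖∑ i, u i‖ ^ 2 =
      n * (1 - α) + n ^ 2 * α - (α - β) * ∑ i, ((innerGraph u β).degree i : ℝ) := by
  rw [← real_inner_self_eq_norm_sq, sum_inner]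
  simp only [inner_sum, hu.inner_eq, sum_add_distrib, sum_const, card_univ, Fintype.card_fin,
    nsmul_eq_mul, sum_ite_eq, mem_univ, if_true, ← sum_filter,
    ← SimpleGraph.neighborFinset_eq_filter, SimpleGraph.card_neighborFinset_eq_degree]
  rw [← sum_mul]
  ring

theorem indepNum_innerGraph_le (hu : IsSphericalCode α β u) (hα : α < 1) (hβ : β < 0)
    (hn : d + 2 ≤ n) : (innerGraph u β).indepNum ≤ d := by
  obtain ⟨s, hs, hcard⟩ := (innerGraph u β).exists_isNIndepSet_indepNum
  by_contra! hd
  obtain ⟨J, hJs, hJ⟩ := exists_subset_card_eq (hcard ▸ hd : d + 1 ≤ #s)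
  have hJα : ∀ i ∈ J, ∀ j ∈ J, i ≠ j → ⟪u i, u j⟫ = α := fun i hi j hj hij =>
    (hu.inner_eq_or hij).resolve_right fun h => hs (hJs hi) (hJs hj) hij ⟨hij, h⟩
  have hsum : ∑ i ∈ J, u i = 0 := by
    rw [← sum_coe_sort]
    refine sum_eq_zero_of_pairwise_inner_eq hα.ne (fun i => hu.1 i)
      (fun i j hij => hJα i i.2 j j.2 (Subtype.coe_ne_coe.2 hij)) ?_
    simp [hJ]
  obtain ⟨j, hj⟩ : J.Nonempty := card_pos.1 (by omega)
  have hα₀ : α < 0 := by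
    by_contra! hα₀
    have : 0 < ⟪u j, ∑ i ∈ J, u i⟫ := by
      rw [inner_sum]
      calc (0 : ℝ) < ⟪u j, u j⟫ := by simp [hu.1 j]
        _ ≤ ∑ i ∈ J, ⟪u j, u i⟫ := by
          refine single_le_sum (f := fun i => ⟪u j, u i⟫) (fun i hi => ?_) hj
          rcases eq_or_ne j i with rfl | hji
          · exact real_inner_self_nonneg
          · exact (hJα j hj i hi hji).symm ▸ hα₀
    simp [hsum] at this
  obtain ⟨w, -, hw⟩ := exists_mem_notMem_of_card_lt_card (s := J) (t := univ) (by simp; omega)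
  have : ⟪u w, ∑ i ∈ J, u i⟫ < 0 := by
    rw [inner_sum]
    refine sum_neg (fun i hi => ?_) ⟨j, hj⟩
    rcases hu.inner_eq_or (ne_of_mem_of_not_mem hi hw).symm with h | h
    · exact h ▸ hα₀
    · exact h ▸ hβ
  simp [hsum] at this

theorem sq_div_add_sum_degree_le (hu : IsSphericalCode α β u) (hα : α < 1) (hβ : β < 0)
    (hn : d + 2 ≤ n) :
    (n : ℝ) ^ 2 / (n + ∑ i, ((innerGraph u β).degree i : ℝ)) ≤ d := by
  set G := innerGraph u β
  calc (n : ℝ) ^ 2 / (n + ∑ i, (G.degree i : ℝ))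
      = (∑ _i : Fin n, (1 : ℝ)) ^ 2 / ∑ i, ((G.degree i : ℝ) + 1) := by
        simp [sum_add_distrib, add_comm]
    _ ≤ ∑ i, 1 ^ 2 / ((G.degree i : ℝ) + 1) :=
      sq_sum_div_le_sum_sq_div _ _ fun i _ => by positivity
    _ = ∑ i, 1 / ((G.degree i : ℝ) + 1) := by simp
    _ ≤ G.indepNum := G.sum_one_div_degree_add_one_le_indepNum
    _ ≤ d := by exact_mod_cast hu.indepNum_innerGraph_le hα hβ hn

end IsSphericalCode

theorem sub_sub_mul_pos_of_div_lt {α β d : ℝ} (hd : 1 < d) (hβ : β < 0)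
    (h : (α - β) / (-β) < 1 + 1 / (d - 1)) : 0 < α - β - d * α := by
  rw [div_lt_iff₀ (neg_pos.2 hβ), one_add_div (by linarith), div_mul_eq_mul_div,
    lt_div_iff₀ (by linarith)] at h
  nlinarith

theorem le_inv_mul_div_of_sq_div_le {n d D α β : ℝ} (hn : 0 < n) (hd : 0 < d) (hD : 0 ≤ D)
    (hβα : β < α) (hκ : 0 < α - β - d * α) (hsq : n ^ 2 / (n + D) ≤ d)
    (hgram : 0 ≤ n * (1 - α) + n ^ 2 * α - (α - β) * D) :
    n ≤ (-α / (α - β) + 1 / d)⁻¹ * ((1 - β) / (α - β)) := by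
  have hαβ : 0 < α - β := by linarith
  rw [div_le_iff₀ (by positivity)] at hsq
  have hmul : n * (n * (α - β - d * α)) ≤ n * (d * (1 - β)) := by
    nlinarith [mul_le_mul_of_nonneg_left hsq hαβ.le, mul_le_mul_of_nonneg_left hgram hd.le]
  calc n ≤ d * (1 - β) / (α - β - d * α) :=
        (le_div_iff₀ hκ).2 (by linarith [le_of_mul_le_mul_left hmul hn])
    _ = (-α / (α - β) + 1 / d)⁻¹ * ((1 - β) / (α - β)) := by
        rw [show -α / (α - β) + 1 / d = (α - β - d * α) / ((α - β) * d) by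
          field_simp; ring, inv_div]
        field_simp

theorem stmt16_general (d : ℕ) (hd : 2 ≤ d)
    (α β : ℝ) (hβα : β < α) (hα : α < 1) (hβ₀ : β < 0)
    (hsmall : (α - β) / (-β) < 1 + 1 / ((d : ℝ) - 1)) :
    ∀ (n : ℕ) (u : Fin n → EuclideanSpace ℝ (Fin d)), IsSphericalCode α β u →
      (n : ℝ) ≤ max ((d : ℝ) + 1)
        ((-α / (α - β) + 1 / (d : ℝ))⁻¹ * ((1 - β) / (α - β))) := by
  intro n u hu
  rcases le_or_gt n (d + 1) with hn | hn
  · exact le_max_of_le_left (by exact_mod_cast hn)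
  have hd₁ : (1 : ℝ) < d := by exact_mod_cast hd
  refine le_max_of_le_right (le_inv_mul_div_of_sq_div_le (Nat.cast_pos.2 (by omega))
    (by linarith) (by positivity) hβα (sub_sub_mul_pos_of_div_lt hd₁ hβ₀ hsmall)
    (hu.sq_div_add_sum_degree_le hα hβ₀ hn) ?_)
  exact hu.norm_sum_sq ▸ sq_nonneg _

/-- if `d ≥ 2` and `(α-β)/(-β) < 1 + 1/(d-1)`, then every spherical
`{α,β}`-code in `ℝ^d` has size at most
`max {d+1, ((-α)/(α-β) + 1/d)⁻¹ · (1-β)/(α-β)}`. -/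
theorem stmt16 (d : ℕ) (hd : 2 ≤ d)
    (α β : ℝ) (hβ₁ : -1 ≤ β) (hβα : β < α) (hα : α < 1) (hβ₀ : β < 0)
    (hsmall : (α - β) / (-β) < 1 + 1 / ((d : ℝ) - 1)) :
    ∀ (n : ℕ) (u : Fin n → EuclideanSpace ℝ (Fin d)), IsSphericalCode α β u →
      (n : ℝ) ≤ max ((d : ℝ) + 1)
        ((-α / (α - β) + 1 / (d : ℝ))⁻¹ * ((1 - β) / (α - β))) :=
  stmt16_general d hd α β hβα hα hβ₀ hsmall
end
end

section
/- Let d be a positive integer, let -1 ≤ β < α < 1 with β < 0, and let k be an integer with 0 ≤ k ≤ d+1. If (1-β)/(α-β) > √(⌊(d+2-k)/2⌋ · ⌈(d+2-k)/2⌉), then every spherical {α,β}-code in ℝ^d has size at most 2^k·(d+2-k) - 1. -/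
open Matrix

noncomputable section

/-!
Fix a vector `x` of the code. The other vectors have inner product `γ ∈ {α, β}` with `x`;
projecting those with a given `γ` onto `xᗮ` and renormalising gives a spherical
`{α', β'}`-code one dimension lower, with `α' = (α - γ²)/(1 - γ²)`, `β' = (β - γ²)/(1 - γ²)`
and the same ratio `(1 - β')/(α' - β') = (1 - β)/(α - β)` (for `γ = -1` there is at most one
such vector). Each of the `k` steps thus at most doubles the bound, down to `k = 0`.

For `k = 0`, `d + 2` code vectors admit an affine relation `∑ gᵢ uᵢ = 0`, `∑ gᵢ = 0`, `g ≠ 0`.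
Expanding `‖∑ gᵢ uᵢ‖² = 0` gives `(1 - β) ∑ gᵢ² ≤ (α - β) (∑ |gᵢ|)² / 2`, while Cauchy–Schwarz
on the positive and the negative part of `g` (which have equal sums) gives
`(∑ |gᵢ|)² ≤ 2 √(⌊m/2⌋⌈m/2⌉) ∑ gᵢ²` with `m = d + 2`.
-/

open Finset RealInnerProductSpace Module

theorem Nat.mul_le_div_two_mul_succ_div_two {p q m : ℕ} (h : p + q ≤ m) :
    p * q ≤ m / 2 * ((m + 1) / 2) := by
  obtain ⟨a, b, hm, hab, hba⟩ : ∃ a b, m / 2 = a ∧ (m + 1) / 2 = b ∧ (b = a ∨ b = a + 1) :=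
    ⟨_, _, rfl, rfl, by omega⟩
  have hsum : p + q ≤ a + b := by omega
  have : 4 * (p * q) ≤ 4 * (a * b) + 1 := by
    rcases hba with rfl | rfl <;> nlinarith [sq_nonneg ((p:ℤ) - q)]
  rw [hm, hab]; omega

theorem Nat.two_le_two_pow_mul_sub {k m : ℕ} (h : k ≤ m + 1) : 2 ≤ 2 ^ k * (m + 2 - k) := by
  rcases k with _ | k
  · omega
  · exact Nat.mul_le_mul (Nat.le_self_pow k.succ_ne_zero 2) (show 1 ≤ m + 2 - (k + 1) by omega)

theorem sq_sum_abs_le_of_sum_eq_zero {ι : Type*} [Fintype ι] (c : ι → ℝ) (hc : ∑ i, c i = 0) :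
    (∑ i, |c i|) ^ 2 ≤
      2 * √(((Fintype.card ι / 2 : ℕ) : ℝ) * ((Fintype.card ι + 1) / 2 : ℕ)) * ∑ i, c i ^ 2 := by
  classical
  set P := univ.filter (fun i => 0 < c i)
  set M := univ.filter (fun i => ¬ 0 < c i)
  set Q := √(((Fintype.card ι / 2 : ℕ) : ℝ) * ((Fintype.card ι + 1) / 2 : ℕ))
  have split (f : ι → ℝ) : ∑ i, f i = ∑ i ∈ P, f i + ∑ i ∈ M, f i :=
    (sum_filter_add_sum_filter_not _ _ _).symm
  set s := ∑ i ∈ P, c i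
  set t := ∑ i ∈ M, c i
  set X := ∑ i ∈ P, c i ^ 2
  set Y := ∑ i ∈ M, c i ^ 2
  have hs : 0 ≤ s := sum_nonneg fun i hi => (mem_filter.1 hi).2.le
  have hst : s + t = 0 := by rw [← split, hc]
  have habs : ∑ i, |c i| = s - t := by
    rw [split, sum_congr rfl fun i hi => abs_of_pos (mem_filter.1 hi).2,
      sum_congr rfl fun i hi => abs_of_nonpos (not_lt.1 (mem_filter.1 hi).2), sum_neg_distrib]
    ring
  have hX : 0 ≤ X := sum_nonneg fun i _ => sq_nonneg _
  have hY : 0 ≤ Y := sum_nonneg fun i _ => sq_nonneg _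
  have hpq : (#P * #M : ℝ) ≤ Q ^ 2 := by
    rw [Real.sq_sqrt (by positivity)]
    exact_mod_cast Nat.mul_le_div_two_mul_succ_div_two
      (card_filter_add_card_filter_not (s := univ) _).le
  have hQ : 0 ≤ Q := Real.sqrt_nonneg _
  have hs2 : s ^ 2 ≤ #P * X := sq_sum_le_card_mul_sum_sq
  have ht2 : t ^ 2 ≤ #M * Y := sq_sum_le_card_mul_sum_sq
  have key : (s ^ 2) ^ 2 ≤ (Q * ((X + Y) / 2)) ^ 2 := calc
    (s ^ 2) ^ 2 = s ^ 2 * t ^ 2 := by rw [show t = -s by linarith]; ring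
    _ ≤ (#P * X) * (#M * Y) := mul_le_mul hs2 ht2 (sq_nonneg _) (by positivity)
    _ = (#P * #M) * (X * Y) := by ring
    _ ≤ Q ^ 2 * ((X + Y) / 2) ^ 2 :=
      mul_le_mul hpq (by nlinarith [sq_nonneg (X - Y)]) (by positivity) (sq_nonneg _)
    _ = (Q * ((X + Y) / 2)) ^ 2 := by ring
  have := (pow_le_pow_iff_left₀ (sq_nonneg s) (by positivity) two_ne_zero).1 key
  rw [habs, split fun i => c i ^ 2, show t = -s by linarith]
  nlinarith

theorem sum_sum_min_mul_zero_of_sum_eq_zero {ι : Type*} [Fintype ι] (c : ι → ℝ)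
    (hc : ∑ i, c i = 0) :
    ∑ i, ∑ j, min (c i * c j) 0 = -(∑ i, |c i|) ^ 2 / 2 := by
  have hmin : ∀ x : ℝ, min x 0 = (x - |x|) / 2 := fun x => by
    rcases le_total 0 x with h | h
    · simp [h, abs_of_nonneg h]
    · simp [h, abs_of_nonpos h]
  simp_rw [hmin, abs_mul, ← sum_div, sum_sub_distrib, ← mul_sum, ← sum_mul, hc]
  ring

theorem one_sub_div_sub_div_eq {α β c : ℝ} (hc : c ≠ 1) :
    (1 - (β - c) / (1 - c)) / ((α - c) / (1 - c) - (β - c) / (1 - c)) = (1 - β) / (α - β) := by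
  have : 1 - c ≠ 0 := sub_ne_zero.2 hc.symm
  rw [div_sub_div_same, one_sub_div this, sub_sub_sub_cancel_right, sub_sub_sub_cancel_right,
    div_div_div_cancel_right₀ this]

variable {E : Type*} [NormedAddCommGroup E] [InnerProductSpace ℝ E]

theorem exists_affine_relation_of_finrank_succ_lt_card {ι : Type*} [Fintype ι]
    [FiniteDimensional ℝ E] (v : ι → E) (h : finrank ℝ E + 1 < Fintype.card ι) :
    ∃ g : ι → ℝ, g ≠ 0 ∧ ∑ i, g i = 0 ∧ ∑ i, g i • v i = 0 := by
  have hdep : ¬ AffineIndependent ℝ v := fun hv =>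
    (hv.card_le_finrank_succ.trans (Nat.succ_le_succ (Submodule.finrank_le _))).not_gt h
  simp only [affineIndependent_iff_of_fintype, not_forall] at hdep
  obtain ⟨g, hg_sum, hg_comb, i, hi⟩ := hdep
  exact ⟨g, fun h => hi (congrFun h i), hg_sum,
    by rwa [univ.weightedVSub_eq_linear_combination hg_sum] at hg_comb⟩

def IsSphericalCodeFamily {ι : Type*} (α β : ℝ) (v : ι → E) : Prop :=
  (∀ i, ‖v i‖ = 1) ∧ Pairwise fun i j => ⟪v i, v j⟫ = α ∨ ⟪v i, v j⟫ = β

theorem IsSphericalCode.isSphericalCodeFamily {α β : ℝ} {d n : ℕ}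
    {u : Fin n → EuclideanSpace ℝ (Fin d)} (hu : IsSphericalCode α β u) :
    IsSphericalCodeFamily α β u :=
  ⟨hu.1, fun i j => hu.2 i j⟩

namespace IsSphericalCodeFamily

variable {ι : Type*} {α β : ℝ} {v : ι → E}

theorem comp {κ : Type*} (hv : IsSphericalCodeFamily α β v) {f : κ → ι} (hf : f.Injective) :
    IsSphericalCodeFamily α β (v ∘ f) :=
  ⟨fun i => hv.1 (f i), fun _ _ hij => hv.2 (hf.ne hij)⟩

theorem injective (hv : IsSphericalCodeFamily α β v) (hα : α < 1) (hβ : β < 1) : v.Injective := by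
  intro i j hij
  by_contra hne
  have h1 : ⟪v i, v j⟫ = 1 := by rw [hij, real_inner_self_eq_norm_sq, hv.1 j]; norm_num
  rcases hv.2 hne with h | h <;> linarith

theorem card_le_one_of_inner_eq_neg_one [Fintype ι] (hv : IsSphericalCodeFamily α β v)
    (hα : α < 1) (hβ : β < 1) {x : E} (hx : ‖x‖ = 1) (hvx : ∀ i, ⟪v i, x⟫ = -1) :
    Fintype.card ι ≤ 1 := by
  have hneg (i : ι) : v i = -x := (inner_eq_neg_one_iff_of_norm_eq_one (hv.1 i) hx).1 (hvx i)
  have : Subsingleton ι := ⟨fun i j => hv.injective hα hβ ((hneg i).trans (hneg j).symm)⟩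
  exact Fintype.card_le_one_iff_subsingleton.2 this

theorem isEmpty_of_finrank_eq_zero [FiniteDimensional ℝ E] (hv : IsSphericalCodeFamily α β v)
    (hE : finrank ℝ E = 0) : IsEmpty ι := by
  have : Subsingleton E := Module.finrank_zero_iff.1 hE
  exact ⟨fun i => by simpa [Subsingleton.elim (v i) 0] using hv.1 i⟩

theorem div_le_of_affine_relation [Fintype ι] (hv : IsSphericalCodeFamily α β v) (hβα : β < α)
    {g : ι → ℝ} (hg : g ≠ 0) (hg_sum : ∑ i, g i = 0) (hg_comb : ∑ i, g i • v i = 0) :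
    (1 - β) / (α - β) ≤
      √(((Fintype.card ι / 2 : ℕ) : ℝ) * ((Fintype.card ι + 1) / 2 : ℕ)) := by
  classical
  set Q := √(((Fintype.card ι / 2 : ℕ) : ℝ) * ((Fintype.card ι + 1) / 2 : ℕ))
  set W := ∑ i, g i ^ 2
  have hαβ : 0 < α - β := sub_pos.2 hβα
  -- `⟪v i, v j⟫ - β` is `1 - β` on the diagonal and `0` or `α - β` off it.
  have termwise (i j : ι) : (1 - β) * (if i = j then g i ^ 2 else 0) + (α - β) * min (g i * g j) 0
      ≤ g i * g j * (⟪v i, v j⟫ - β) := by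
    by_cases hij : i = j
    · subst hij
      rw [real_inner_self_eq_norm_sq, hv.1, min_eq_right (mul_self_nonneg _), if_pos rfl]
      nlinarith
    · rw [if_neg hij, mul_zero, zero_add]
      rcases hv.2 hij with h | h <;> rw [h]
      · rw [mul_comm (g i * g j)]; exact mul_le_mul_of_nonneg_left (min_le_left _ _) hαβ.le
      · simpa using mul_nonpos_of_nonneg_of_nonpos hαβ.le (min_le_right _ _)
  have gram : ∑ i, ∑ j, g i * g j * (⟪v i, v j⟫ - β) = 0 := by
    have expand : ∑ i, ∑ j, g i * g j * (⟪v i, v j⟫ - β)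
        = ⟪∑ i, g i • v i, ∑ j, g j • v j⟫ - β * ((∑ i, g i) * ∑ j, g j) := by
      simp_rw [sum_inner, inner_sum, real_inner_smul_left, real_inner_smul_right, sum_mul_sum,
        mul_sum, ← sum_sub_distrib]
      exact sum_congr rfl fun i _ => sum_congr rfl fun j _ => by ring
    rw [expand, hg_comb, hg_sum, inner_zero_left]; ring
  have hW : 0 < W := by
    obtain ⟨i, hi⟩ := Function.ne_iff.1 hg
    exact (sq_pos_of_ne_zero hi).trans_le
      (single_le_sum (fun j _ => sq_nonneg (g j)) (mem_univ i))
  have hsum := sum_le_sum fun i (_ : i ∈ univ) => sum_le_sum fun j (_ : j ∈ univ) => termwise i j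
  simp_rw [sum_add_distrib, ← mul_sum, sum_ite_eq, mem_univ, if_true] at hsum
  rw [gram, sum_sum_min_mul_zero_of_sum_eq_zero g hg_sum] at hsum
  have habs := sq_sum_abs_le_of_sum_eq_zero g hg_sum
  rw [div_le_iff₀ hαβ]
  nlinarith

theorem card_le_finrank_succ [Fintype ι] [FiniteDimensional ℝ E]
    (hv : IsSphericalCodeFamily α β v) (hβα : β < α)
    (hratio : √(((finrank ℝ E + 2) / 2 : ℕ) * ((finrank ℝ E + 2 + 1) / 2 : ℕ) : ℝ)
      < (1 - β) / (α - β)) :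
    Fintype.card ι ≤ finrank ℝ E + 1 := by
  by_contra! h
  obtain ⟨e⟩ := Function.Embedding.nonempty_of_card_le
    (α := Fin (finrank ℝ E + 2)) (β := ι) (by rw [Fintype.card_fin]; exact h)
  obtain ⟨g, hg, hg_sum, hg_comb⟩ :=
    exists_affine_relation_of_finrank_succ_lt_card (v ∘ e) (by simp)
  have := (hv.comp e.injective).div_le_of_affine_relation hβα hg hg_sum hg_comb
  rw [Fintype.card_fin] at this
  exact this.not_gt hratio

theorem exists_projected_code (hv : IsSphericalCodeFamily α β v) {x : E} (hx : ‖x‖ = 1)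
    {γ : ℝ} (hγ : γ ^ 2 < 1) (hvx : ∀ i, ⟪v i, x⟫ = γ) :
    ∃ w : ι → (ℝ ∙ x)ᗮ,
      IsSphericalCodeFamily ((α - γ ^ 2) / (1 - γ ^ 2)) ((β - γ ^ 2) / (1 - γ ^ 2)) w := by
  have hγ' : 0 < 1 - γ ^ 2 := sub_pos.2 hγ
  have hxv (i : ι) : ⟪x, v i⟫ = γ := by rw [real_inner_comm, hvx]
  set c := (√(1 - γ ^ 2))⁻¹
  have hc : c ^ 2 = (1 - γ ^ 2)⁻¹ := by rw [inv_pow, Real.sq_sqrt hγ'.le]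
  let w i := c • (ℝ ∙ x)ᗮ.orthogonalProjectionOnto (v i)
  have hw (i : ι) : (w i : E) = c • (v i - γ • x) := by
    simp [w, Submodule.starProjection_orthogonal_val,
      Submodule.starProjection_unit_singleton ℝ hx, hxv]
  have hinner (i j : ι) : ⟪w i, w j⟫ = (⟪v i, v j⟫ - γ ^ 2) / (1 - γ ^ 2) := by
    rw [Submodule.coe_inner, hw, hw, real_inner_smul_left, real_inner_smul_right, inner_sub_left,
      inner_sub_right, inner_sub_right, real_inner_smul_left, real_inner_smul_right,
      real_inner_smul_left, real_inner_smul_right, hvx, hxv, real_inner_self_eq_norm_sq, hx,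
      ← mul_assoc, ← sq, hc]
    ring
  refine ⟨w, fun i => ?_, fun i j hij => ?_⟩
  · rw [← pow_eq_one_iff_of_nonneg (norm_nonneg _) two_ne_zero, ← real_inner_self_eq_norm_sq,
      hinner, real_inner_self_eq_norm_sq, hv.1, one_pow, div_self hγ'.ne']
  · show _ ∨ _
    rw [hinner]
    exact (hv.2 hij).imp (fun h => by rw [h]) (fun h => by rw [h])

theorem card_le_one_add_card_add_card [Fintype ι] [DecidableEq ι]
    (hv : IsSphericalCodeFamily α β v) (i₀ : ι) :
    Fintype.card ι ≤
      1 + #{i | i ≠ i₀ ∧ ⟪v i, v i₀⟫ = α} + #{i | i ≠ i₀ ∧ ⟪v i, v i₀⟫ = β} := by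
  have hsub : univ ⊆ {i₀} ∪ ({i | i ≠ i₀ ∧ ⟪v i, v i₀⟫ = α} : Finset ι)
      ∪ ({i | i ≠ i₀ ∧ ⟪v i, v i₀⟫ = β} : Finset ι) := by
    intro i _
    by_cases hi : i = i₀
    · simp [hi]
    · rcases hv.2 hi with h | h <;> simp [hi, h]
  refine (card_le_card hsub).trans ((card_union_le _ _).trans ?_)
  grw [card_union_le, card_singleton]

theorem card_le_two_pow_mul [Fintype ι] [FiniteDimensional ℝ E] (k : ℕ) {d : ℕ}
    (hE : finrank ℝ E = d) (hv : IsSphericalCodeFamily α β v) (hβα : β < α) (hα : α < 1)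
    (hk : k ≤ d + 1)
    (hratio : √(((d + 2 - k) / 2 : ℕ) * ((d + 2 - k + 1) / 2 : ℕ) : ℝ) < (1 - β) / (α - β)) :
    Fintype.card ι ≤ 2 ^ k * (d + 2 - k) - 1 := by
  induction k generalizing E ι α β d with
  | zero =>
    subst hE
    simpa using hv.card_le_finrank_succ hβα (by simpa using hratio)
  | succ k ih =>
    classical
    obtain _ | e := d
    · have := hv.isEmpty_of_finrank_eq_zero hE
      simp
    rcases isEmpty_or_nonempty ι with hι | ⟨⟨i₀⟩⟩
    · simp
    have he : e + 1 + 2 - (k + 1) = e + 2 - k := by omega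
    rw [he] at hratio ⊢
    set M := 2 ^ k * (e + 2 - k) - 1
    have hM : 1 ≤ M := by
      have := Nat.two_le_two_pow_mul_sub (show k ≤ e + 1 by omega)
      omega
    have neighbours (γ : ℝ) (hγ : γ = α ∨ γ = β) : #{i | i ≠ i₀ ∧ ⟪v i, v i₀⟫ = γ} ≤ M := by
      set S : Finset ι := {i | i ≠ i₀ ∧ ⟪v i, v i₀⟫ = γ}
      have hS : IsSphericalCodeFamily α β (fun i : S => v i) := hv.comp Subtype.val_injective
      have hSγ (i : S) : ⟪v i, v i₀⟫ = γ := (mem_filter.1 i.2).2.2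
      have hγ₁ : γ < 1 := by rcases hγ with rfl | rfl <;> linarith
      rw [← Fintype.card_coe]
      rcases le_or_gt γ (-1) with hγ₀ | hγ₀
      · have hSx (i : S) : ⟪v i, v i₀⟫ = -1 := (hSγ i).trans <| le_antisymm hγ₀ <|
          hSγ i ▸ neg_one_le_real_inner_of_norm_eq_one (hv.1 i) (hv.1 i₀)
        exact (hS.card_le_one_of_inner_eq_neg_one hα (hβα.trans hα) (hv.1 i₀) hSx).trans hM
      · obtain ⟨w, hw⟩ := hS.exists_projected_code (hv.1 i₀) (by nlinarith) hSγ
        have hv₀ : v i₀ ≠ 0 := norm_ne_zero_iff.1 (by simp [hv.1 i₀])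
        refine ih (Submodule.finrank_add_finrank_orthogonal' ?_) hw ?_ ?_ (by omega) ?_
        · rw [finrank_span_singleton hv₀, hE, add_comm]
        · exact div_lt_div_of_pos_right (by linarith) (by nlinarith)
        · exact (div_lt_one (by nlinarith)).2 (by linarith)
        · rwa [one_sub_div_sub_div_eq (by nlinarith)]
    have := hv.card_le_one_add_card_add_card i₀
    have := neighbours α (.inl rfl)
    have := neighbours β (.inr rfl)
    have : 2 ^ (k + 1) * (e + 2 - k) = 2 * (2 ^ k * (e + 2 - k)) := by ring
    omega

end IsSphericalCodeFamily

theorem stmt17_general (d : ℕ)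
    (α β : ℝ) (hβα : β < α) (hα : α < 1)
    (k : ℕ) (hk : k ≤ d + 1)
    (hbig : (1 - β) / (α - β) >
      Real.sqrt ((((d + 2 - k) / 2 : ℕ) : ℝ) * (((d + 2 - k + 1) / 2 : ℕ) : ℝ))) :
    ∀ (n : ℕ) (u : Fin n → EuclideanSpace ℝ (Fin d)), IsSphericalCode α β u →
      n ≤ 2 ^ k * (d + 2 - k) - 1 := by
  intro n u hu
  simpa using hu.isSphericalCodeFamily.card_le_two_pow_mul k (finrank_euclideanSpace_fin) hβα hα
    hk hbig

/-- if `0 ≤ k ≤ d+1` and `(1-β)/(α-β) > √(⌊(d+2-k)/2⌋·⌈(d+2-k)/2⌉)`, then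
every spherical `{α,β}`-code in `ℝ^d` has size at most `2^k·(d+2-k) - 1`. -/
theorem stmt17 (d : ℕ) (hd : 0 < d)
    (α β : ℝ) (hβ₁ : -1 ≤ β) (hβα : β < α) (hα : α < 1) (hβ₀ : β < 0)
    (k : ℕ) (hk : k ≤ d + 1)
    (hbig : (1 - β) / (α - β) >
      Real.sqrt ((((d + 2 - k) / 2 : ℕ) : ℝ) * (((d + 2 - k + 1) / 2 : ℕ) : ℝ))) :
    ∀ (n : ℕ) (u : Fin n → EuclideanSpace ℝ (Fin d)), IsSphericalCode α β u →
      n ≤ 2 ^ k * (d + 2 - k) - 1 :=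
  stmt17_general d α β hβα hα k hk hbig
end
end
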